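/- arXiv:math/0302310 — 6 statements merged into one kernel-verified Lean document; each statement's English description precedes it below -/
import Mathlib

section
/- With the filtration setup as above, define the unbounded operator D = Σ_{n≥1} n P_n on H. Then for every a ∈ A_p, the commutator [D,a] extends to a bounded operator on H with norm at most Σ_{|j| ≤ p} |j| · ‖a‖ ≤ p(p+1)‖a‖. -/
/-!
Write `Q k` for the orthogonal projection onto the `k`-th filtration space `K k`, so that
`D = ∑ n P_n = ∑_k (1 - Q k)`. The truncations `D_N = ∑_{k<N} (1 - Q k)` satisfy
`[D_N, B] = U_N(B) - U_N(B⋆)⋆` with `U_N(B) = ∑_{k<N} (1 - Q k) B Q k`. When `B` and `B⋆` raise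
the filtration degree by at most `p`, `U_N(B)` splits into the diagonals
`∑_i c_{ij} P_{i+j} B P_i`, `1 ≤ j ≤ p`, with weights `0 ≤ c_{ij} ≤ j`; orthogonality of the
`P_i` bounds the `j`-th diagonal by `j ‖B‖`, so `‖[D_N, B]‖ ≤ p (p + 1) ‖B‖` uniformly in `N`.
Since `[D_N, B]` is eventually constant on each `K n`, it converges strongly to a bounded `T`
with the same bound, and `T x = D B x - B D x` because `D_N y → D y` on the domain of `D`.
-/

open Filter Topology Finset

section InnerProduct

variable {𝕜 E ι : Type*} [RCLike 𝕜] [NormedAddCommGroup E] [InnerProductSpace 𝕜 E]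

theorem norm_sum_sq_eq_sum_norm_sq_of_pairwise_inner_eq_zero (s : Finset ι) (v : ι → E)
    (h : (s : Set ι).Pairwise fun i j => inner 𝕜 (v i) (v j) = 0) :
    ‖∑ i ∈ s, v i‖ ^ 2 = ∑ i ∈ s, ‖v i‖ ^ 2 := by
  classical
  induction s using Finset.induction_on with
  | empty => simp
  | insert a s ha ih =>
    have horth : inner 𝕜 (v a) (∑ i ∈ s, v i) = 0 := by
      rw [inner_sum]
      exact sum_eq_zero fun i hi => h (by simp) (by simp [hi]) (by rintro rfl; exact ha hi)
    rw [sum_insert ha, sum_insert ha, ← ih (h.mono (by simp))]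
    simpa only [sq] using norm_add_sq_eq_norm_sq_add_norm_sq_of_inner_eq_zero _ _ horth

theorem sub_apply_mem_orthogonal_of_symmetric {U : Submodule 𝕜 E} {Q : E →L[𝕜] E}
    (hfix : ∀ x ∈ U, Q x = x) (hsym : ∀ x y, inner 𝕜 (Q x) y = inner 𝕜 x (Q y)) (x : E) :
    x - Q x ∈ Uᗮ :=
  (Submodule.mem_orthogonal U _).2 fun w hw => by rw [inner_sub_right, ← hsym, hfix w hw, sub_self]

end InnerProduct

section Limits

variable {𝕜 E F : Type*} [NontriviallyNormedField 𝕜] [NormedAddCommGroup E] [NormedSpace 𝕜 E]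
  [NormedAddCommGroup F] [NormedSpace 𝕜 F]

theorem cauchySeq_apply_of_dense {C : ℕ → E →L[𝕜] F} {c : ℝ} (hC : ∀ N, ‖C N‖ ≤ c) {s : Set E}
    (hs : Dense s) (h : ∀ y ∈ s, CauchySeq fun N => C N y) (x : E) :
    CauchySeq fun N => C N x := by
  have hc : 0 ≤ c := (norm_nonneg _).trans (hC 0)
  have hlip : ∀ N y, dist (C N x) (C N y) ≤ c * dist x y := fun N y => by
    rw [dist_eq_norm, dist_eq_norm, ← map_sub]
    exact (C N).le_of_opNorm_le (hC N) _
  rw [Metric.cauchySeq_iff']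
  intro ε hε
  obtain ⟨y, hxy, hys⟩ := Metric.dense_iff.1 hs x (ε / (3 * (c + 1))) (by positivity)
  obtain ⟨N₀, hN₀⟩ := Metric.cauchySeq_iff'.1 (h y hys) (ε / 3) (by positivity)
  have hcxy : c * dist x y < ε / 3 := by
    rw [Metric.mem_ball, dist_comm] at hxy
    calc c * dist x y ≤ (c + 1) * dist x y := by gcongr; linarith
      _ < (c + 1) * (ε / (3 * (c + 1))) := by gcongr
      _ = ε / 3 := by field_simp
  refine ⟨N₀, fun N hN => ?_⟩
  calc dist (C N x) (C N₀ x)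
      ≤ dist (C N x) (C N y) + dist (C N y) (C N₀ y) + dist (C N₀ y) (C N₀ x) := dist_triangle4 ..
    _ < ε := by
      rw [dist_comm (C N₀ y)]
      linarith [hlip N y, hlip N₀ y, hN₀ N hN]

theorem exists_tendsto_apply_of_cauchySeq [CompleteSpace F] {C : ℕ → E →L[𝕜] F} {c : ℝ}
    (hC : ∀ N, ‖C N‖ ≤ c) (h : ∀ x, CauchySeq fun N => C N x) :
    ∃ T : E →L[𝕜] F, ‖T‖ ≤ c ∧ ∀ x, Tendsto (fun N => C N x) atTop (𝓝 (T x)) := by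
  choose f hf using fun x => cauchySeq_tendsto_of_complete (h x)
  let T₀ : E →ₗ[𝕜] F := linearMapOfTendsto f (fun N => (C N : E →ₗ[𝕜] F)) (tendsto_pi_nhds.2 hf)
  have hT₀ : ∀ x, ‖T₀ x‖ ≤ c * ‖x‖ := fun x =>
    le_of_tendsto (hf x).norm (Eventually.of_forall fun N => (C N).le_of_opNorm_le (hC N) x)
  exact ⟨T₀.mkContinuous c hT₀, T₀.mkContinuous_norm_le ((norm_nonneg _).trans (hC 0)) hT₀, hf⟩

end Limits

theorem sum_Icc_one_natCast_mul_two (p : ℕ) : (∑ j ∈ Icc 1 p, (j : ℝ)) * 2 = p * (p + 1) := by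
  induction p with
  | zero => simp
  | succ p ih => rw [sum_Icc_succ_top (by omega), add_mul, ih]; push_cast; ring

section Filtration

variable {𝕜 E : Type*} [RCLike 𝕜] [NormedAddCommGroup E] [InnerProductSpace 𝕜 E]
  (K : ℕ → Submodule 𝕜 E) [∀ n, (K n).HasOrthogonalProjection]

noncomputable def layerProj : ℕ → E →L[𝕜] E
  | 0 => (K 0).starProjection
  | n + 1 => (K (n + 1)).starProjection - (K n).starProjection

theorem sum_range_layerProj (n : ℕ) :
    ∑ i ∈ range (n + 1), layerProj K i = (K n).starProjection := by
  induction n with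
  | zero => simp [layerProj]
  | succ n ih => rw [sum_range_succ, ih, layerProj, add_sub_cancel]

variable {K}

theorem starProjection_sub_starProjection_eq_sum_layerProj {N M : ℕ} (h : N ≤ M) :
    (K M).starProjection - (K N).starProjection = ∑ n ∈ Ioc N M, layerProj K n := by
  rw [← sum_range_layerProj, ← sum_range_layerProj, ← Finset.Ico_add_one_add_one_eq_Ioc,
    Finset.sum_Ico_eq_sub _ (by omega)]

theorem layerProj_apply_mem (hK : Monotone K) (n : ℕ) (x : E) : layerProj K n x ∈ K n := by
  cases n with
  | zero => exact (K 0).starProjection_apply_mem x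
  | succ n =>
    exact sub_mem ((K _).starProjection_apply_mem x)
      (hK n.le_succ ((K n).starProjection_apply_mem x))

theorem layerProj_succ_apply_mem_orthogonal (hK : Monotone K) (n : ℕ) (x : E) :
    layerProj K (n + 1) x ∈ (K n)ᗮ := by
  have h : (K n).starProjection ((K (n + 1)).starProjection x) = (K n).starProjection x := by
    rw [← ContinuousLinearMap.comp_apply,
      Submodule.starProjection_comp_starProjection_of_le (hK n.le_succ)]
  simpa [layerProj, h] using (K n).sub_starProjection_mem_orthogonal ((K (n + 1)).starProjection x)

theorem inner_layerProj_layerProj_of_lt (hK : Monotone K) {m n : ℕ} (h : m < n) (x y : E) :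
    inner 𝕜 (layerProj K m x) (layerProj K n y) = 0 := by
  obtain ⟨n, rfl⟩ : ∃ k, n = k + 1 := ⟨n - 1, by omega⟩
  exact Submodule.inner_right_of_mem_orthogonal (hK (by omega) (layerProj_apply_mem hK m x))
    (layerProj_succ_apply_mem_orthogonal hK n y)

theorem inner_layerProj_layerProj_of_ne (hK : Monotone K) {m n : ℕ} (h : m ≠ n) (x y : E) :
    inner 𝕜 (layerProj K m x) (layerProj K n y) = 0 := by
  rcases h.lt_or_gt with h | h
  · exact inner_layerProj_layerProj_of_lt hK h x y
  · exact inner_eq_zero_symm.1 (inner_layerProj_layerProj_of_lt hK h y x)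

theorem norm_sum_layerProj_sq_of_injOn (hK : Monotone K) {ι : Type*} (s : Finset ι) (σ : ι → ℕ)
    (hσ : Set.InjOn σ s) (y : ι → E) :
    ‖∑ i ∈ s, layerProj K (σ i) (y i)‖ ^ 2 = ∑ i ∈ s, ‖layerProj K (σ i) (y i)‖ ^ 2 :=
  norm_sum_sq_eq_sum_norm_sq_of_pairwise_inner_eq_zero s _ fun _ hi _ hj hij =>
    inner_layerProj_layerProj_of_ne hK (hσ.ne hi hj hij) _ _

theorem norm_sum_layerProj_sq (hK : Monotone K) (s : Finset ℕ) (y : ℕ → E) :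
    ‖∑ n ∈ s, layerProj K n (y n)‖ ^ 2 = ∑ n ∈ s, ‖layerProj K n (y n)‖ ^ 2 :=
  norm_sum_layerProj_sq_of_injOn hK s id (Set.injOn_id _) y

theorem sum_norm_layerProj_sq_le (hK : Monotone K) (s : Finset ℕ) (x : E) :
    ∑ i ∈ s, ‖layerProj K i x‖ ^ 2 ≤ ‖x‖ ^ 2 := by
  obtain ⟨n, hs⟩ := s.exists_nat_subset_range
  calc ∑ i ∈ s, ‖layerProj K i x‖ ^ 2
      ≤ ∑ i ∈ range (n + 1), ‖layerProj K i x‖ ^ 2 :=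
        sum_le_sum_of_subset_of_nonneg (hs.trans (range_subset_range.2 n.le_succ))
          (by intros; positivity)
    _ = ‖(K n).starProjection x‖ ^ 2 := by
        rw [← sum_range_layerProj K n, _root_.sum_apply]
        exact (norm_sum_layerProj_sq hK _ fun _ => x).symm
    _ ≤ ‖x‖ ^ 2 := by gcongr; exact (K n).norm_starProjection_apply_le x

theorem norm_layerProj_apply_le (hK : Monotone K) (n : ℕ) (x : E) : ‖layerProj K n x‖ ≤ ‖x‖ := by
  refine (pow_le_pow_iff_left₀ (norm_nonneg _) (norm_nonneg _) two_ne_zero).1 ?_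
  simpa using sum_norm_layerProj_sq_le hK {n} x

theorem sub_starProjection_eq_sum_layerProj_of_mem (hK : Monotone K) {M : ℕ} {y : E}
    (hy : y ∈ K M) (k : ℕ) : y - (K k).starProjection y = ∑ m ∈ Ioc k M, layerProj K m y := by
  rcases le_total k M with h | h
  · rw [← _root_.sum_apply, ← starProjection_sub_starProjection_eq_sum_layerProj h,
      sub_apply, (K M).starProjection_eq_self_iff.2 hy]
  · rw [Ioc_eq_empty (by omega), sum_empty, (K k).starProjection_eq_self_iff.2 (hK h hy), sub_self]

variable (K) in
noncomputable def truncDegreeOp (N : ℕ) : E →L[𝕜] E :=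
  ∑ k ∈ range N, (1 - (K k).starProjection)

theorem truncDegreeOp_apply (N : ℕ) (x : E) :
    truncDegreeOp K N x = ∑ k ∈ range N, (x - (K k).starProjection x) := by
  simp [truncDegreeOp, _root_.sum_apply]

theorem truncDegreeOp_apply_of_mem (hK : Monotone K) {M N : ℕ} (h : M ≤ N) {x : E}
    (hx : x ∈ K M) : truncDegreeOp K N x = truncDegreeOp K M x := by
  rw [truncDegreeOp_apply, truncDegreeOp_apply]
  refine (sum_subset (range_subset_range.2 h) fun k hkN hkM => ?_).symm
  rw [(K k).starProjection_eq_self_iff.2 (hK (by simpa using hkM) hx), sub_self]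

theorem norm_natCast_smul_sum_layerProj_le (hK : Monotone K) {N : ℕ} {s : Finset ℕ}
    (hs : ∀ n ∈ s, N ≤ n) (y : E) :
    ‖(N : 𝕜) • ∑ n ∈ s, layerProj K n y‖ ≤ ‖∑ n ∈ s, (n : 𝕜) • layerProj K n y‖ := by
  refine (pow_le_pow_iff_left₀ (norm_nonneg _) (norm_nonneg _) two_ne_zero).1 ?_
  simp_rw [smul_sum, ← map_smul]
  rw [norm_sum_layerProj_sq hK s fun _ => (N : 𝕜) • y,
    norm_sum_layerProj_sq hK s fun n => (n : 𝕜) • y]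
  refine sum_le_sum fun n hn => ?_
  simp only [map_smul, norm_smul, RCLike.norm_natCast]
  gcongr
  exact hs n hn

theorem tendsto_truncDegreeOp_apply (hK : Monotone K) (hdense : Dense (⋃ n, (K n : Set E)))
    {y Dy : E} (hy : HasSum (fun n : ℕ => (n : 𝕜) • layerProj K n y) Dy) :
    Tendsto (fun N => truncDegreeOp K N y) atTop (𝓝 Dy) := by
  set S : ℕ → E := fun N => ∑ n ∈ range (N + 1), (n : 𝕜) • layerProj K n y
  have hS : Tendsto S atTop (𝓝 Dy) := hy.tendsto_sum_nat.comp (tendsto_add_atTop_nat 1)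
  have hsplit : ∀ N : ℕ, truncDegreeOp K N y = S N + (N : 𝕜) • (y - (K N).starProjection y) := by
    intro N
    induction N with
    | zero => simp [S, truncDegreeOp, layerProj]
    | succ N ih =>
      rw [truncDegreeOp_apply, sum_range_succ, ← truncDegreeOp_apply, ih]
      simp only [S, sum_range_succ _ (N + 1), layerProj, sub_apply]
      push_cast
      module
  have hQ : Tendsto (fun M => (K M).starProjection y) atTop (𝓝 y) := by
    refine Submodule.starProjection_tendsto_self K hK y
      (Submodule.dense_iff_topologicalClosure_eq_top.1 (hdense.mono ?_)).ge
    exact Set.iUnion_subset fun n => SetLike.coe_subset_coe.2 (le_iSup K n)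
  -- the layers beyond `N` carry weights `> N` in `Dy - S N`, which therefore dominates the tail
  have htail : ∀ N : ℕ, ‖(N : 𝕜) • (y - (K N).starProjection y)‖ ≤ ‖Dy - S N‖ := by
    intro N
    refine le_of_tendsto_of_tendsto (((hQ.sub_const _).const_smul (N : 𝕜)).norm)
      ((hS.sub_const (S N)).norm) ?_
    filter_upwards [eventually_ge_atTop N] with M hM
    have hSdiff : S M - S N = ∑ n ∈ Ioc N M, (n : 𝕜) • layerProj K n y := by
      simp only [S]
      rw [← Finset.Ico_add_one_add_one_eq_Ioc, Finset.sum_Ico_eq_sub _ (by omega)]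
    rw [hSdiff, ← sub_apply, starProjection_sub_starProjection_eq_sum_layerProj hM,
      _root_.sum_apply]
    exact norm_natCast_smul_sum_layerProj_le hK (fun n hn => (mem_Ioc.1 hn).1.le) y
  have hrem : Tendsto (fun N : ℕ => (N : 𝕜) • (y - (K N).starProjection y)) atTop (𝓝 0) :=
    squeeze_zero_norm htail (by simpa using (hS.const_sub Dy).norm)
  simpa [hsplit] using hS.add hrem

variable (K) in
noncomputable def upperPart (B : E →L[𝕜] E) (N : ℕ) : E →L[𝕜] E :=
  ∑ k ∈ range N, (1 - (K k).starProjection) * B * (K k).starProjection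

theorem commutator_truncDegreeOp_eq [CompleteSpace E] (B : E →L[𝕜] E) (N : ℕ) :
    truncDegreeOp K N * B - B * truncDegreeOp K N =
      upperPart K B N - star (upperPart K (star B) N) := by
  simp only [truncDegreeOp, upperPart, star_sum, star_mul, star_sub, star_one, star_star,
    (isSelfAdjoint_starProjection _).star_eq, sum_mul, mul_sum, ← sum_sub_distrib]
  exact sum_congr rfl fun k _ => by noncomm_ring

theorem norm_sum_smul_layerProj_le (hK : Monotone K) (B : E →L[𝕜] E) (j : ℕ) (s : Finset ℕ)
    (c : ℕ → 𝕜) {r : ℝ} (hr : 0 ≤ r) (hc : ∀ i ∈ s, ‖c i‖ ≤ r) (x : E) :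
    ‖∑ i ∈ s, c i • layerProj K (i + j) (B (layerProj K i x))‖ ≤ r * ‖B‖ * ‖x‖ := by
  refine (pow_le_pow_iff_left₀ (norm_nonneg _) (by positivity) two_ne_zero).1 ?_
  rw [sum_congr rfl fun i _ => (map_smul (layerProj K (i + j)) (c i) _).symm,
    norm_sum_layerProj_sq_of_injOn hK s (· + j) (fun _ _ _ _ h => by simpa using h)]
  calc ∑ i ∈ s, ‖layerProj K (i + j) (c i • B (layerProj K i x))‖ ^ 2
      ≤ ∑ i ∈ s, (r * ‖B‖) ^ 2 * ‖layerProj K i x‖ ^ 2 := by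
        refine sum_le_sum fun i hi => ?_
        rw [← mul_pow]
        gcongr
        calc ‖layerProj K (i + j) (c i • B (layerProj K i x))‖
            ≤ ‖c i • B (layerProj K i x)‖ := norm_layerProj_apply_le hK _ _
          _ ≤ r * (‖B‖ * ‖layerProj K i x‖) := by
            rw [norm_smul]; gcongr; exacts [hc i hi, B.le_opNorm _]
          _ = _ := by ring
    _ ≤ (r * ‖B‖) ^ 2 * ‖x‖ ^ 2 := by
        rw [← mul_sum]; gcongr; exact sum_norm_layerProj_sq_le hK s x
    _ = (r * ‖B‖ * ‖x‖) ^ 2 := by ring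

variable {B : E →L[𝕜] E} {p : ℕ}

theorem upperPart_apply (hK : Monotone K) (hB : ∀ n, ∀ x ∈ K n, B x ∈ K (n + p)) (N : ℕ)
    (x : E) :
    upperPart K B N x = ∑ j ∈ Icc 1 p, ∑ i ∈ range N,
      ((min N (i + j) - i : ℕ) : 𝕜) • layerProj K (i + j) (B (layerProj K i x)) := by
  set v : ℕ → ℕ → E := fun i m => layerProj K m (B (layerProj K i x))
  have hterm : ∀ k, (1 - (K k).starProjection) (B ((K k).starProjection x))
      = ∑ i ∈ range (k + 1), ∑ m ∈ Ioc k (i + p), v i m := by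
    intro k
    have hx : (K k).starProjection x = ∑ i ∈ range (k + 1), layerProj K i x := by
      rw [← _root_.sum_apply, sum_range_layerProj]
    rw [sub_apply, one_apply_eq_self, hx, map_sum, map_sum, ← sum_sub_distrib]
    exact sum_congr rfl fun i _ =>
      sub_starProjection_eq_sum_layerProj_of_mem hK (hB i _ (layerProj_apply_mem hK i x)) k
  -- the coefficient of `P m B P i` counts the `k < N` with `i ≤ k < m`
  calc upperPart K B N x
      = ∑ k ∈ range N, ∑ i ∈ range (k + 1), ∑ m ∈ Ioc k (i + p), v i m := by
        simp only [upperPart, _root_.sum_apply, mul_apply_eq_comp, hterm]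
    _ = ∑ i ∈ range N, ∑ k ∈ Ico i N, ∑ m ∈ Ioc k (i + p), v i m :=
        sum_comm' fun k i => by simp only [mem_range, mem_Ico]; omega
    _ = ∑ i ∈ range N, ∑ m ∈ Ioc i (i + p), ∑ k ∈ Ico i (min N m), v i m :=
        sum_congr rfl fun i _ => sum_comm' fun k m => by simp only [mem_Ioc, mem_Ico]; omega
    _ = ∑ i ∈ range N, ∑ m ∈ Ioc i (i + p), ((min N m - i : ℕ) : 𝕜) • v i m := by
        simp only [sum_const, Nat.card_Ico, Nat.cast_smul_eq_nsmul]
    _ = ∑ i ∈ range N, ∑ j ∈ Icc 1 p, ((min N (i + j) - i : ℕ) : 𝕜) • v i (i + j) := by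
        refine sum_congr rfl fun i _ => ?_
        rw [← Finset.Icc_add_one_left_eq_Ioc, ← map_add_left_Icc 1 p i, sum_map]
        rfl
    _ = _ := sum_comm

theorem norm_upperPart_le (hK : Monotone K) (hB : ∀ n, ∀ x ∈ K n, B x ∈ K (n + p)) (N : ℕ) :
    ‖upperPart K B N‖ ≤ (∑ j ∈ Icc 1 p, (j : ℝ)) * ‖B‖ := by
  refine ContinuousLinearMap.opNorm_le_bound _ (by positivity) fun x => ?_
  rw [upperPart_apply hK hB, sum_mul, sum_mul]
  refine (norm_sum_le _ _).trans (sum_le_sum fun j _ =>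
    norm_sum_smul_layerProj_le hK B j _ _ (Nat.cast_nonneg j) (fun i _ => ?_) x)
  rw [RCLike.norm_natCast]
  exact_mod_cast (by omega : min N (i + j) - i ≤ j)

theorem norm_commutator_truncDegreeOp_le [CompleteSpace E] (hK : Monotone K)
    (hB : ∀ n, ∀ x ∈ K n, B x ∈ K (n + p)) (hB' : ∀ n, ∀ x ∈ K n, star B x ∈ K (n + p)) (N : ℕ) :
    ‖truncDegreeOp K N * B - B * truncDegreeOp K N‖ ≤ p * (p + 1) * ‖B‖ := by
  rw [commutator_truncDegreeOp_eq]
  calc _ ≤ ‖upperPart K B N‖ + ‖star (upperPart K (star B) N)‖ := norm_sub_le _ _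
    _ = ‖upperPart K B N‖ + ‖upperPart K (star B) N‖ := by rw [norm_star (upperPart K (star B) N)]
    _ ≤ (∑ j ∈ Icc 1 p, (j : ℝ)) * ‖B‖ + (∑ j ∈ Icc 1 p, (j : ℝ)) * ‖B‖ := by
      gcongr
      · exact norm_upperPart_le hK hB N
      · exact (norm_upperPart_le hK hB' N).trans_eq (by rw [norm_star B])
    _ = p * (p + 1) * ‖B‖ := by rw [← sum_Icc_one_natCast_mul_two]; ring

theorem exists_bounded_commutator_degreeOp [CompleteSpace E] (hK : Monotone K)
    (hdense : Dense (⋃ n, (K n : Set E))) (hB : ∀ n, ∀ x ∈ K n, B x ∈ K (n + p))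
    (hB' : ∀ n, ∀ x ∈ K n, star B x ∈ K (n + p)) :
    ∃ T : E →L[𝕜] E, ‖T‖ ≤ p * (p + 1) * ‖B‖ ∧ ∀ x Dx DBx : E,
      HasSum (fun n : ℕ => (n : 𝕜) • layerProj K n x) Dx →
      HasSum (fun n : ℕ => (n : 𝕜) • layerProj K n (B x)) DBx → T x = DBx - B Dx := by
  set C : ℕ → E →L[𝕜] E := fun N => truncDegreeOp K N * B - B * truncDegreeOp K N
  have hC : ∀ N, ‖C N‖ ≤ p * (p + 1) * ‖B‖ := norm_commutator_truncDegreeOp_le hK hB hB'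
  have hstable : ∀ y ∈ ⋃ n, (K n : Set E), CauchySeq fun N => C N y := by
    simp only [Set.mem_iUnion, SetLike.mem_coe]
    rintro y ⟨M, hy⟩
    refine (tendsto_atTop_of_eventually_const (i₀ := M + p) (x := C (M + p) y)
      fun N hN => ?_).cauchySeq
    simp only [C, sub_apply, mul_apply_eq_comp]
    rw [truncDegreeOp_apply_of_mem hK hN (hB M y hy), truncDegreeOp_apply_of_mem hK (by omega) hy,
      truncDegreeOp_apply_of_mem hK (M.le_add_right p) hy]
  obtain ⟨T, hT, hlim⟩ :=
    exists_tendsto_apply_of_cauchySeq hC (cauchySeq_apply_of_dense hC hdense hstable)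
  refine ⟨T, hT, fun x Dx DBx hx hBx => tendsto_nhds_unique (hlim x) ?_⟩
  simpa [C] using (tendsto_truncDegreeOp_apply hK hdense hBx).sub
    ((B.continuous.tendsto Dx).comp (tendsto_truncDegreeOp_apply hK hdense hx))

end Filtration

open scoped ComplexInnerProductSpace

theorem stmt_1_general
    {A : Type*} [Ring A] [Algebra ℂ A] [StarRing A]
    {H : Type*} [NormedAddCommGroup H] [InnerProductSpace ℂ H] [CompleteSpace H]
    (π : A →⋆ₐ[ℂ] (H →L[ℂ] H)) (Ω : H)
    (F : ℕ → Submodule ℂ A)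
    (hmono : Monotone F)
    (hunion : ∀ a : A, ∃ n, a ∈ F n)
    (hstar : ∀ n, ∀ a ∈ F n, star a ∈ F n)
    (hmul : ∀ m n : ℕ, ∀ a ∈ F m, ∀ b ∈ F n, a * b ∈ F (m + n))
    (vec : A →ₗ[ℂ] H)
    (hvec : ∀ a : A, vec a = π a Ω)
    (hcyclic : Dense (Set.range vec : Set H))
    (Q : ℕ → H →L[ℂ] H)
    (hQmem : ∀ n x, Q n x ∈ (F n).map vec)
    (hQfix : ∀ n, ∀ x ∈ (F n).map vec, Q n x = x)
    (hQsym : ∀ n (x y : H), ⟪Q n x, y⟫ = ⟪x, Q n y⟫)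
    (P : ℕ → H →L[ℂ] H)
    (hP0 : P 0 = Q 0)
    (hPsucc : ∀ n : ℕ, P (n + 1) = Q (n + 1) - Q n)
    (p : ℕ) (a : A) (ha : a ∈ F p) :
    ∃ T : H →L[ℂ] H,
      ‖T‖ ≤ (p : ℝ) * ((p : ℝ) + 1) * ‖π a‖ ∧
      ∀ (x Dx Dax : H),
        HasSum (fun n : ℕ => (n : ℂ) • P n x) Dx →
        HasSum (fun n : ℕ => (n : ℂ) • P n (π a x)) Dax →
        T x = Dax - π a Dx := by
  set K : ℕ → Submodule ℂ H := fun n => (F n).map vec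
  have hQorth n x : x - Q n x ∈ (K n)ᗮ :=
    sub_apply_mem_orthogonal_of_symmetric (hQfix n) (hQsym n) x
  have (n : ℕ) : (K n).HasOrthogonalProjection := ⟨fun x => ⟨Q n x, hQmem n x, hQorth n x⟩⟩
  have hQ n : Q n = (K n).starProjection :=
    ContinuousLinearMap.ext fun x =>
      ((K n).eq_starProjection_of_mem_orthogonal (hQmem n x) (hQorth n x)).symm
  obtain rfl : P = layerProj K := by
    funext n
    cases n <;> simp [layerProj, hP0, hPsucc, hQ]
  have hdense : Dense (⋃ n, (K n : Set H)) := hcyclic.mono <| by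
    rintro _ ⟨b, rfl⟩
    obtain ⟨n, hn⟩ := hunion b
    exact Set.mem_iUnion.2 ⟨n, b, hn, rfl⟩
  have hband : ∀ b ∈ F p, ∀ n, ∀ x ∈ K n, π b x ∈ K (n + p) := by
    rintro b hb n _ ⟨c, hc, rfl⟩
    refine ⟨b * c, add_comm p n ▸ hmul p n b hb c hc, ?_⟩
    rw [hvec, hvec, map_mul]
    rfl
  exact exists_bounded_commutator_degreeOp (fun m n h => Submodule.map_mono (hmono h)) hdense
    (hband a ha) (by rw [← map_star]; exact hband _ (hstar p a ha))

/-- With the filtration setup as in the paper, define the unbounded operator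
`D = Σ_{n≥1} n P_n` on `H` (encoded via `HasSum`).  For every `a ∈ A_p`,
the commutator `[D, π a]` extends to a bounded operator `T` on `H`
with `‖T‖ ≤ Σ_{|j|≤p} |j| ⬝ ‖π a‖ = p(p+1)‖π a‖`. -/
theorem stmt_1
    {A : Type*} [Ring A] [Algebra ℂ A] [StarRing A]
    {H : Type*} [NormedAddCommGroup H] [InnerProductSpace ℂ H] [CompleteSpace H]
    (π : A →⋆ₐ[ℂ] (H →L[ℂ] H)) (Ω : H)
    (F : ℕ → Submodule ℂ A)
    (hmono : Monotone F)
    (hunion : ∀ a : A, ∃ n, a ∈ F n)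
    (hstar : ∀ n, ∀ a ∈ F n, star a ∈ F n)
    (hmul : ∀ m n : ℕ, ∀ a ∈ F m, ∀ b ∈ F n, a * b ∈ F (m + n))
    (hzero : F 0 = Submodule.span ℂ {1})
    (hfd : ∀ n, FiniteDimensional ℂ (F n))
    (vec : A →ₗ[ℂ] H)
    (hvec : ∀ a : A, vec a = π a Ω)
    (hfaithful : Function.Injective vec)
    (hcyclic : Dense (Set.range vec : Set H))
    (Q : ℕ → H →L[ℂ] H)
    (hQmem : ∀ n x, Q n x ∈ (F n).map vec)
    (hQfix : ∀ n, ∀ x ∈ (F n).map vec, Q n x = x)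
    (hQsym : ∀ n (x y : H), ⟪Q n x, y⟫ = ⟪x, Q n y⟫)
    (P : ℕ → H →L[ℂ] H)
    (hP0 : P 0 = Q 0)
    (hPsucc : ∀ n : ℕ, P (n + 1) = Q (n + 1) - Q n)
    (p : ℕ) (a : A) (ha : a ∈ F p) :
    ∃ T : H →L[ℂ] H,
      ‖T‖ ≤ (p : ℝ) * ((p : ℝ) + 1) * ‖π a‖ ∧
      ∀ (x Dx Dax : H),
        HasSum (fun n : ℕ => (n : ℂ) • P n x) Dx →
        HasSum (fun n : ℕ => (n : ℂ) • P n (π a x)) Dax →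
        T x = Dax - π a Dx :=
  stmt_1_general π Ω F hmono hunion hstar hmul vec hvec hcyclic Q hQmem hQfix hQsym P hP0 hPsucc p a
    ha
end

section
/- Let (X,ρ) be a δ-hyperbolic metric space in the four-point sense: ρ(x,y)+ρ(z,w) ≤ max{ρ(x,z)+ρ(y,w), ρ(x,w)+ρ(y,z)} + δ for all x,y,z,w. Let G be a group with integer-valued length function ℓ inducing left-invariant metric ρ(x,y)=ℓ(x⁻¹y) which is δ-hyperbolic. Suppose x = yz with ℓ(x)=m, ℓ(y)=k, ℓ(z)=n, and x = x̄·x̃ with ℓ(x̄)=k−q and ℓ(x̃)=n−q̃, where p = k+n−m, q = ⌊p/2⌋, q̃ = p−q. Then ρ(y, x̄) ≤ q̃ + δ; i.e., y = x̄u for some u with ℓ(u) ≤ q̃ + δ. -/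
/-- Let `ℓ` be an integer-valued length function on a group `G` whose induced
left-invariant metric `ρ(x,y) = ℓ(x⁻¹y)` is `δ`-hyperbolic in the four-point sense.
Suppose `x = y z` with `ℓ(x) = m`, `ℓ(y) = k`, `ℓ(z) = n`, and `x = x̄ x̃` with
`ℓ(x̄) = k - q`, `ℓ(x̃) = n - q̃`, where `p = k + n - m`, `q = ⌊p/2⌋`, `q̃ = p - q`.
Then `ρ(y, x̄) ≤ q̃ + δ`; i.e. `y = x̄ u` with `ℓ(u) = ℓ(x̄⁻¹y) ≤ q̃ + δ`. -/
theorem stmt_7 {G : Type*} [Group G] (ℓ : G → ℕ) (δ : ℝ)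
    (hδ : 0 ≤ δ)
    (hone : ℓ 1 = 0)
    (hinv : ∀ g : G, ℓ g⁻¹ = ℓ g)
    (hsub : ∀ g h : G, ℓ (g * h) ≤ ℓ g + ℓ h)
    (hhyp : ∀ x y z w : G,
      ((ℓ (x⁻¹ * y) : ℝ) + (ℓ (z⁻¹ * w) : ℝ)) ≤
        max ((ℓ (x⁻¹ * z) : ℝ) + (ℓ (y⁻¹ * w) : ℝ))
            ((ℓ (x⁻¹ * w) : ℝ) + (ℓ (y⁻¹ * z) : ℝ)) + δ)
    (x y z xbar xtil : G) (m k n : ℕ) (p q qtil : ℤ)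
    (hx : x = y * z) (hxbar : x = xbar * xtil)
    (hm : ℓ x = m) (hk : ℓ y = k) (hn : ℓ z = n)
    (hp : p = (k : ℤ) + n - m) (hq : q = p / 2) (hqtil : qtil = p - q)
    (hlxbar : (ℓ xbar : ℤ) = k - q) (hlxtil : (ℓ xtil : ℤ) = n - qtil) :
    (ℓ (xbar⁻¹ * y) : ℝ) ≤ (qtil : ℝ) + δ := by
  have h := hhyp 1 x xbar y
  simp only [inv_one, one_mul] at h
  have h1 : x⁻¹ * y = z⁻¹ := by rw [hx]; group
  have h2 : x⁻¹ * xbar = xtil⁻¹ := by rw [hxbar]; group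
  rw [h1, h2, hinv, hinv] at h
  have hmn : m ≤ k + n := by
    rw [← hm, ← hk, ← hn, hx]; exact hsub y z
  have hmn' : (m : ℤ) ≤ (k : ℤ) + n := by exact_mod_cast hmn
  have hqq : q ≤ qtil := by omega
  have hpr : (p : ℝ) = (k : ℝ) + n - m := by exact_mod_cast hp
  have hqtr : (qtil : ℝ) = (p : ℝ) - q := by exact_mod_cast hqtil
  have hqqr : (q : ℝ) ≤ qtil := by exact_mod_cast hqq
  have hcast : ((ℓ xbar : ℤ) : ℝ) = (k : ℝ) - q := by exact_mod_cast hlxbar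
  have hcast2 : ((ℓ xtil : ℤ) : ℝ) = (n : ℝ) - qtil := by exact_mod_cast hlxtil
  push_cast at hcast hcast2
  rw [hm, hn, hk] at h
  rcases le_total ((ℓ xbar : ℝ) + n) ((k : ℝ) + ℓ xtil) with hc | hc
  · rw [max_eq_right hc] at h
    push_cast at h ⊢
    linarith
  · rw [max_eq_left hc] at h
    push_cast at h ⊢
    have : (q : ℝ) ≤ qtil := by exact_mod_cast hqq
    linarith
end

section
/- Let (G,ℓ,ρ) be as above with ρ δ-hyperbolic. Fix y ∈ G with ℓ(y) = k, and suppose y = su = tw with ℓ(s) = ℓ(t) = k − q and ℓ(u), ℓ(w) ≤ q̃ + δ, where q̃ − q ≤ 1. Then ρ(s,t) ≤ 1 + 2δ. In particular, the number of distinct elements s that can appear in such a factorization of y is at most the cardinality of a ball of radius 1+2δ in G. -/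
/-- Let `ℓ` be an integer-valued length function on a group `G` whose induced
left-invariant metric `ρ(x,y) = ℓ(x⁻¹y)` is `δ`-hyperbolic in the four-point sense.
Fix `y` with `ℓ(y) = k` and suppose `y = s u = t w` with `ℓ(s) = ℓ(t) = k - q` and
`ℓ(u), ℓ(w) ≤ q̃ + δ` where `q ≤ q̃ ≤ q + 1`.  Then `ρ(s,t) = ℓ(s⁻¹t) ≤ 1 + 2δ`.
In particular the set of `s`'s appearing in such factorizations of `y` injects into
the ball of radius `1 + 2δ` in `G`. -/
theorem stmt_8 {G : Type*} [Group G] (ℓ : G → ℕ) (δ : ℝ)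
    (hδ : 0 ≤ δ)
    (hone : ℓ 1 = 0)
    (hinv : ∀ g : G, ℓ g⁻¹ = ℓ g)
    (hsub : ∀ g h : G, ℓ (g * h) ≤ ℓ g + ℓ h)
    (hhyp : ∀ x y z w : G,
      ((ℓ (x⁻¹ * y) : ℝ) + (ℓ (z⁻¹ * w) : ℝ)) ≤
        max ((ℓ (x⁻¹ * z) : ℝ) + (ℓ (y⁻¹ * w) : ℝ))
            ((ℓ (x⁻¹ * w) : ℝ) + (ℓ (y⁻¹ * z) : ℝ)) + δ)
    (k q qtil : ℕ) (hq : q ≤ qtil) (hq' : qtil ≤ q + 1) (hqk : q ≤ k)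
    (y : G) (hy : ℓ y = k) :
    (∀ s u t w : G, y = s * u → y = t * w →
      ℓ s = k - q → ℓ t = k - q →
      (ℓ u : ℝ) ≤ (qtil : ℝ) + δ → (ℓ w : ℝ) ≤ (qtil : ℝ) + δ →
      (ℓ (s⁻¹ * t) : ℝ) ≤ 1 + 2 * δ) ∧
    ∃ f : {s : G // ∃ u : G, y = s * u ∧ ℓ s = k - q ∧ (ℓ u : ℝ) ≤ (qtil : ℝ) + δ} →
        {g : G // (ℓ g : ℝ) ≤ 1 + 2 * δ},
      Function.Injective f := by
  have key : ∀ s u t w : G, y = s * u → y = t * w →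
      ℓ s = k - q → ℓ t = k - q →
      (ℓ u : ℝ) ≤ (qtil : ℝ) + δ → (ℓ w : ℝ) ≤ (qtil : ℝ) + δ →
      (ℓ (s⁻¹ * t) : ℝ) ≤ 1 + 2 * δ := by
    intro s u t w hsu htw hs ht hu hw
    have h1 := hhyp s t 1 y
    have e1 : (1:G)⁻¹ * y = y := by group
    have e2 : s⁻¹ * (1:G) = s⁻¹ := by group
    have e3 : t⁻¹ * y = w := by rw [htw]; group
    have e4 : s⁻¹ * y = u := by rw [hsu]; group
    have e5 : t⁻¹ * (1:G) = t⁻¹ := by group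
    rw [e1, e2, e3, e4, e5, hinv, hinv, hy, hs, ht] at h1
    have hkq : ((k - q : ℕ) : ℝ) = (k : ℝ) - q := by
      rw [Nat.cast_sub hqk]
    have hqt : (qtil : ℝ) ≤ (q : ℝ) + 1 := by exact_mod_cast hq'
    have hmax : max (((k - q : ℕ) : ℝ) + (ℓ w : ℝ)) ((ℓ u : ℝ) + ((k - q : ℕ) : ℝ))
        ≤ ((k : ℝ) - q) + (qtil + δ) := by
      rw [hkq]
      apply max_le <;> linarith
    have := le_trans h1 (by linarith : max (((k - q : ℕ) : ℝ) + (ℓ w : ℝ))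
      ((ℓ u : ℝ) + ((k - q : ℕ) : ℝ)) + δ ≤ ((k : ℝ) - q) + (qtil + δ) + δ)
    linarith
  refine ⟨key, ?_⟩
  by_cases hne : Nonempty {s : G // ∃ u : G, y = s * u ∧ ℓ s = k - q ∧ (ℓ u : ℝ) ≤ (qtil : ℝ) + δ}
  · obtain ⟨⟨s₀, u₀, hy0, hs0, hu0⟩⟩ := hne
    refine ⟨fun p => ⟨s₀⁻¹ * p.1, ?_⟩, ?_⟩
    · obtain ⟨u, hyu, hsu, huu⟩ := p.2
      exact key s₀ u₀ p.1 u hy0 hyu hs0 hsu hu0 huu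
    · intro a b hab
      have : s₀⁻¹ * a.1 = s₀⁻¹ * b.1 := congrArg Subtype.val hab
      exact Subtype.ext (mul_left_cancel this)
  · exact ⟨fun p => ⟨1, by rw [hone]; push_cast; linarith⟩, fun a b _ => (hne ⟨a⟩).elim⟩
end

section
/- The group ℤ² with word-length ℓ((p,q)) = |p| + |q| does not satisfy the Haagerup-type condition: for every constant C there exist integers k, m, n and a function f on ℤ² supported on the sphere E_k = {x : ℓ(x) = k} with ‖P_m f P_n‖ > C ‖f‖₂, where f acts by convolution on ℓ²(ℤ²) and P_j denotes the projection onto functions supported on E_j. -/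
open scoped Classical

/-- The `ℓ²`-norm of a finitely supported function. -/
noncomputable def fnorm2 {G : Type*} (f : MonoidAlgebra ℂ G) : ℝ :=
  Real.sqrt (∑ x ∈ f.coeff.support, ‖f.coeff x‖ ^ 2)

/-- `f` is supported on the sphere `E_k = {x : ℓ x = k}`. -/
def SuppOnSphere {G : Type*} (ℓ : G → ℕ) (k : ℕ) (f : MonoidAlgebra ℂ G) : Prop :=
  ∀ x, f.coeff x ≠ 0 → ℓ x = k

/-- `P_m f`: the restriction (orthogonal projection in `ℓ²(G)`) of `f` to the
sphere `E_m = {x : ℓ x = m}`. -/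
noncomputable def sphProj {G : Type*} (ℓ : G → ℕ) (m : ℕ) (f : MonoidAlgebra ℂ G) :
    MonoidAlgebra ℂ G :=
  MonoidAlgebra.ofCoeff (f.coeff.filter (fun x => ℓ x = m))

/-- `ℓ` is an integer-valued length function on the group `G`. -/
def IsLengthFunction {G : Type*} [Group G] (ℓ : G → ℕ) : Prop :=
  ℓ 1 = 0 ∧ (∀ g : G, ℓ g⁻¹ = ℓ g) ∧ ∀ g h : G, ℓ (g * h) ≤ ℓ g + ℓ h

/-- The Haagerup-type condition for `(G, ℓ)` with constant `C`:
`‖P_m f P_n‖ ≤ C ‖f‖₂` for every `f` supported on the sphere `E_k`, expressed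
concretely on `ℓ²(G)`: for every finitely supported `ξ` supported on `E_n`,
`‖P_m (f * ξ)‖₂ ≤ C ‖f‖₂ ‖ξ‖₂` (where `f * ξ` is the convolution). -/
def GroupHaagerupCond {G : Type*} [Group G] (ℓ : G → ℕ) (C : ℝ) : Prop :=
  ∀ (k m n : ℕ) (f ξ : MonoidAlgebra ℂ G),
    SuppOnSphere ℓ k f → SuppOnSphere ℓ n ξ →
    fnorm2 (sphProj ℓ m (f * ξ)) ≤ C * fnorm2 f * fnorm2 ξ

/-- The word-length of the standard generating set of `ℤ²`:
`ℓ((p,q)) = |p| + |q|` (written on the multiplicative copy of `ℤ²`). -/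
def lenZ2 (x : Multiplicative (ℤ × ℤ)) : ℕ :=
  (Multiplicative.toAdd x).1.natAbs + (Multiplicative.toAdd x).2.natAbs

/-!
On `ℤ²` with `ℓ(p,q) = |p| + |q|`, take `f` to be the indicator of the segment
`{(p, k - p) : 1 ≤ p ≤ k}` of the sphere `E_k` and `ξ` a multiple of the indicator of
`{(q, n - q) : 1 ≤ q ≤ n}` in `E_n`. All these points lie in the first quadrant, where `ℓ` is
additive, so `f * ξ` lives on `E_{k+n}`, and each of the `n - k` points `(s, k + n - s)` with
`k < s ≤ n` is hit by all `k` points of the support of `f`. With `n = 2k` and `‖ξ‖₂ = 1` this gives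
`‖P_{3k} (f * ξ)‖₂² ≥ k · k² / (2k) = k²/2`, while `‖f‖₂² = k`; the ratio `√(k/2)` is unbounded.
-/

open MonoidAlgebra

section

variable {G : Type*}

lemma fnorm2_nonneg (f : MonoidAlgebra ℂ G) : 0 ≤ fnorm2 f :=
  Real.sqrt_nonneg _

lemma fnorm2_sq (f : MonoidAlgebra ℂ G) :
    fnorm2 f ^ 2 = ∑ x ∈ f.coeff.support, ‖f.coeff x‖ ^ 2 :=
  Real.sq_sqrt (by positivity)

lemma fnorm2_sq_eq_sum_of_support_subset {f : MonoidAlgebra ℂ G} {s : Finset G}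
    (h : f.coeff.support ⊆ s) : fnorm2 f ^ 2 = ∑ x ∈ s, ‖f.coeff x‖ ^ 2 := by
  rw [fnorm2_sq]
  refine Finset.sum_subset h fun x _ hx => ?_
  rw [Finsupp.notMem_support_iff.1 hx, norm_zero, zero_pow two_ne_zero]

lemma sum_sq_le_fnorm2_sq (f : MonoidAlgebra ℂ G) (s : Finset G) :
    ∑ x ∈ s, ‖f.coeff x‖ ^ 2 ≤ fnorm2 f ^ 2 := by
  rw [fnorm2_sq_eq_sum_of_support_subset (Finset.subset_union_right (s₁ := s))]
  exact Finset.sum_le_sum_of_subset_of_nonneg Finset.subset_union_left fun _ _ _ => by positivity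

lemma sum_sq_le_fnorm2_sphProj_sq (ℓ : G → ℕ) (m : ℕ) (f : MonoidAlgebra ℂ G) {s : Finset G}
    (hs : ∀ x ∈ s, ℓ x = m) : ∑ x ∈ s, ‖f.coeff x‖ ^ 2 ≤ fnorm2 (sphProj ℓ m f) ^ 2 := by
  refine le_of_eq_of_le (Finset.sum_congr rfl fun x hx => ?_) (sum_sq_le_fnorm2_sq _ s)
  rw [sphProj, coeff_ofCoeff, Finsupp.filter_apply, if_pos (hs x hx)]

end

def diagPt (j : ℕ) (p : ℤ) : Multiplicative (ℤ × ℤ) := Multiplicative.ofAdd (p, j - p)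

lemma diagPt_mul (j j' : ℕ) (p p' : ℤ) : diagPt j p * diagPt j' p' = diagPt (j + j') (p + p') := by
  simp only [diagPt, ← ofAdd_add, Prod.mk_add_mk, Nat.cast_add]
  congr 2
  ring

lemma diagPt_injective (j : ℕ) : Function.Injective (diagPt j) := fun _ _ h =>
  congrArg (fun x => (Multiplicative.toAdd x).1) h

lemma lenZ2_diagPt {j : ℕ} {p : ℤ} (h₀ : 0 ≤ p) (hj : p ≤ j) : lenZ2 (diagPt j p) = j := by
  simp only [lenZ2, diagPt, toAdd_ofAdd]
  omega

noncomputable def diagSeg (j : ℕ) (c : ℂ) : MonoidAlgebra ℂ (Multiplicative (ℤ × ℤ)) :=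
  ∑ p ∈ Finset.Icc (1 : ℤ) j, single (diagPt j p) c

lemma diagSeg_coeff_diagPt (j : ℕ) (c : ℂ) (p : ℤ) :
    (diagSeg j c).coeff (diagPt j p) = if p ∈ Finset.Icc (1 : ℤ) j then c else 0 := by
  simp only [diagSeg, coeff_sum, Finsupp.finsetSum_apply, coeff_single, Finsupp.single_apply,
    (diagPt_injective j).eq_iff, Finset.sum_ite_eq']

lemma support_diagSeg_subset (j : ℕ) (c : ℂ) :
    (diagSeg j c).coeff.support ⊆ (Finset.Icc (1 : ℤ) j).image (diagPt j) := by
  rw [diagSeg, coeff_sum]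
  refine Finsupp.support_finsetSum.trans (Finset.biUnion_subset.2 fun p hp => ?_)
  exact (Finsupp.support_single_subset).trans
    (Finset.singleton_subset_iff.2 (Finset.mem_image_of_mem _ hp))

lemma suppOnSphere_diagSeg (j : ℕ) (c : ℂ) : SuppOnSphere lenZ2 j (diagSeg j c) := by
  intro x hx
  obtain ⟨p, hp, rfl⟩ :=
    Finset.mem_image.1 (support_diagSeg_subset j c (Finsupp.mem_support_iff.2 hx))
  rw [Finset.mem_Icc] at hp
  exact lenZ2_diagPt (by omega) hp.2

lemma fnorm2_diagSeg_sq (j : ℕ) (c : ℂ) : fnorm2 (diagSeg j c) ^ 2 = j * ‖c‖ ^ 2 := by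
  rw [fnorm2_sq_eq_sum_of_support_subset (support_diagSeg_subset j c),
    Finset.sum_image fun _ _ _ _ h => diagPt_injective j h,
    Finset.sum_congr rfl fun p hp => by rw [diagSeg_coeff_diagPt, if_pos hp],
    Finset.sum_const, Int.card_Icc, nsmul_eq_mul]
  norm_num

/-- Every `p ∈ [1, k]` pairs with `q = s - p ∈ [1, n]`, so the coefficient counts all `k` of them. -/
lemma diagSeg_mul_coeff {k n : ℕ} {s : ℤ} (hks : k < s) (hsn : s ≤ n) (c₁ c₂ : ℂ) :
    (diagSeg k c₁ * diagSeg n c₂).coeff (diagPt (k + n) s) = k * (c₁ * c₂) := by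
  have hshift : ∀ p, (diagPt k p)⁻¹ * diagPt (k + n) s = diagPt n (s - p) := fun p => by
    rw [inv_mul_eq_iff_eq_mul, diagPt_mul, add_sub_cancel]
  have hterm : ∀ p ∈ Finset.Icc (1 : ℤ) k,
      (single (diagPt k p) c₁ * diagSeg n c₂).coeff (diagPt (k + n) s) = c₁ * c₂ := by
    intro p hp
    rw [Finset.mem_Icc] at hp
    rw [coeff_single_mul_apply, hshift, diagSeg_coeff_diagPt, if_pos (Finset.mem_Icc.2 (by omega))]
  rw [diagSeg, Finset.sum_mul, coeff_sum, Finsupp.finsetSum_apply, Finset.sum_congr rfl hterm,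
    Finset.sum_const, Int.card_Icc, nsmul_eq_mul]
  norm_num

lemma diagSeg_mul_sphProj_lower_bound (k n : ℕ) (c₁ c₂ : ℂ) :
    ((n - k : ℕ) : ℝ) * (k * ‖c₁ * c₂‖) ^ 2 ≤
      fnorm2 (sphProj lenZ2 (k + n) (diagSeg k c₁ * diagSeg n c₂)) ^ 2 := by
  have hlen : ∀ x ∈ (Finset.Ioc (k : ℤ) n).image (diagPt (k + n)), lenZ2 x = k + n := by
    intro x hx
    obtain ⟨s, hs, rfl⟩ := Finset.mem_image.1 hx
    rw [Finset.mem_Ioc] at hs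
    exact lenZ2_diagPt (by omega) (by push_cast; omega)
  have hterm : ∀ s ∈ Finset.Ioc (k : ℤ) n,
      ‖(diagSeg k c₁ * diagSeg n c₂).coeff (diagPt (k + n) s)‖ ^ 2 = (k * ‖c₁ * c₂‖) ^ 2 := by
    intro s hs
    rw [Finset.mem_Ioc] at hs
    rw [diagSeg_mul_coeff hs.1 hs.2, norm_mul, Complex.norm_natCast]
  refine le_of_eq_of_le ?_ (sum_sq_le_fnorm2_sphProj_sq _ _ _ hlen)
  rw [Finset.sum_image fun _ _ _ _ h => diagPt_injective _ h, Finset.sum_congr rfl hterm,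
    Finset.sum_const, Int.card_Ioc, nsmul_eq_mul]
  congr 2
  omega

/-- The group `ℤ²` with its standard word-length `ℓ((p,q)) = |p| + |q|` does not
satisfy the Haagerup-type condition: for every constant `C` there are integers
`k, m, n`, a function `f` supported on the sphere `E_k` and a vector `ξ` supported on
the sphere `E_n` with `‖ξ‖₂ ≤ 1` and `‖P_m (f * ξ)‖₂ > C ‖f‖₂`, so that
`‖P_m f P_n‖ > C ‖f‖₂`. -/
theorem stmt_10 :
    ∀ C : ℝ, ∃ (k m n : ℕ) (f ξ : MonoidAlgebra ℂ (Multiplicative (ℤ × ℤ))),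
      SuppOnSphere lenZ2 k f ∧ SuppOnSphere lenZ2 n ξ ∧ fnorm2 ξ ≤ 1 ∧
      fnorm2 (sphProj lenZ2 m (f * ξ)) > C * fnorm2 f := by
  intro C
  obtain ⟨k, hk⟩ := exists_nat_gt (2 * C ^ 2)
  have hk₀ : (0 : ℝ) < k := lt_of_le_of_lt (by positivity) hk
  set c : ℂ := (((√(2 * k))⁻¹ : ℝ) : ℂ)
  have hc : ‖c‖ ^ 2 = (2 * k : ℝ)⁻¹ := by
    rw [Complex.norm_real, Real.norm_eq_abs, sq_abs, inv_pow, Real.sq_sqrt (by positivity)]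
  refine ⟨k, k + 2 * k, 2 * k, diagSeg k 1, diagSeg (2 * k) c, suppOnSphere_diagSeg _ _,
    suppOnSphere_diagSeg _ _, ?_, ?_⟩
  · rw [← pow_le_one_iff_of_nonneg (fnorm2_nonneg _) two_ne_zero, fnorm2_diagSeg_sq, hc]
    push_cast
    rw [mul_inv_cancel₀ (by positivity)]
  · refine lt_of_pow_lt_pow_left₀ 2 (fnorm2_nonneg _)
      (lt_of_lt_of_le ?_ (diagSeg_mul_sphProj_lower_bound _ _ _ _))
    rw [mul_pow, fnorm2_diagSeg_sq, norm_mul, norm_one, one_mul, mul_pow (k : ℝ), hc,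
      show 2 * k - k = k by omega]
    field_simp
    nlinarith
end

section
/- Let φ_N ∈ ℓ²(ℤ) be defined by φ_N(k) = −1/k for |k| > N and 0 otherwise, and let T be a bounded operator on a Hilbert space with orthogonal projections {P_n} summing to the identity, such that [D,T] is bounded where D = Σ n P_n. Then the operator T^{(N)} = Σ_{|m−n|>N} P_m T P_n satisfies ‖T^{(N)}‖ ≤ 2π ‖φ_N‖₂ ‖[D,T]‖, and ‖φ_N‖₂ = (2 Σ_{k>N} k^{−2})^{1/2} → 0 as N → ∞. -/
open scoped ComplexInnerProductSpace

private lemma cs_tsum {c b : ℕ → ℝ} (hc : ∀ n, 0 ≤ c n) (hb : ∀ n, 0 ≤ b n)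
    (hc2 : Summable fun n => c n ^ 2) (hb2 : Summable fun n => b n ^ 2) :
    Summable (fun n => c n * b n) ∧
      ∑' n, c n * b n ≤ Real.sqrt (∑' n, c n ^ 2) * Real.sqrt (∑' n, b n ^ 2) := by
  have key : ∀ u : Finset ℕ, ∑ n ∈ u, c n * b n ≤
      Real.sqrt (∑' n, c n ^ 2) * Real.sqrt (∑' n, b n ^ 2) := by
    intro u
    have h1 : (∑ n ∈ u, c n * b n) ^ 2 ≤ (∑' n, c n ^ 2) * (∑' n, b n ^ 2) :=
      calc (∑ n ∈ u, c n * b n) ^ 2 ≤ (∑ n ∈ u, c n ^ 2) * (∑ n ∈ u, b n ^ 2) :=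
            Finset.sum_mul_sq_le_sq_mul_sq u c b
        _ ≤ (∑' n, c n ^ 2) * (∑' n, b n ^ 2) :=
            mul_le_mul (Summable.sum_le_tsum u (fun i _ => sq_nonneg _) hc2)
              (Summable.sum_le_tsum u (fun i _ => sq_nonneg _) hb2)
              (Finset.sum_nonneg fun i _ => sq_nonneg _) (tsum_nonneg fun i => sq_nonneg _)
    have h2 : 0 ≤ ∑ n ∈ u, c n * b n :=
      Finset.sum_nonneg fun i _ => mul_nonneg (hc i) (hb i)
    calc ∑ n ∈ u, c n * b n = Real.sqrt ((∑ n ∈ u, c n * b n) ^ 2) := (Real.sqrt_sq h2).symm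
      _ ≤ Real.sqrt ((∑' n, c n ^ 2) * (∑' n, b n ^ 2)) := Real.sqrt_le_sqrt h1
      _ = _ := Real.sqrt_mul (tsum_nonneg fun i => sq_nonneg _) _
  have hsummable : Summable fun n => c n * b n :=
    summable_of_sum_le (fun n => mul_nonneg (hc n) (hb n)) key
  exact ⟨hsummable, Summable.tsum_le_of_sum_le hsummable key⟩

/-- Let `{P_n}` be mutually orthogonal projections summing strongly to the identity on a
Hilbert space, `D = Σ n P_n`, and `T` a bounded operator whose commutator `[D,T]` is
bounded, i.e. there is a bounded `S` with `P_m S P_n = (m-n) P_m T P_n` for all `m,n`.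
With `φ_N ∈ ℓ²(ℤ)` given by `φ_N(k) = -1/k` for `|k| > N` and `0` otherwise (so that
`‖φ_N‖₂ = (2 Σ_{k>N} k⁻²)^{1/2}`), the operator `T^{(N)} = Σ_{|m-n|>N} P_m T P_n`
satisfies `‖T^{(N)}‖ ≤ 2π ‖φ_N‖₂ ‖[D,T]‖`, and `‖φ_N‖₂ → 0` as `N → ∞`. -/
theorem stmt_15 {H : Type*} [NormedAddCommGroup H] [InnerProductSpace ℂ H]
    [CompleteSpace H]
    (P : ℕ → H →L[ℂ] H)
    (hidem : ∀ n, P n ∘L P n = P n)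
    (hsym : ∀ n (x y : H), ⟪P n x, y⟫ = ⟪x, P n y⟫)
    (horth : ∀ m n : ℕ, m ≠ n → P m ∘L P n = 0)
    (hsum : ∀ x : H, HasSum (fun n : ℕ => P n x) x)
    (T S : H →L[ℂ] H)
    (hS : ∀ m n : ℕ, P m ∘L S ∘L P n = (((m : ℂ) - (n : ℂ))) • (P m ∘L T ∘L P n))
    (N : ℕ) (TN : H →L[ℂ] H)
    (hTN : ∀ m n : ℕ, P m ∘L TN ∘L P n =
      if (N : ℤ) < |(m : ℤ) - (n : ℤ)| then P m ∘L T ∘L P n else 0) :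
    ‖TN‖ ≤ 2 * Real.pi *
        Real.sqrt (2 * ∑' k : {k : ℕ // N < k}, (((k : ℕ) : ℝ) ^ 2)⁻¹) * ‖S‖ ∧
    Filter.Tendsto
      (fun M : ℕ => Real.sqrt (2 * ∑' k : {k : ℕ // M < k}, (((k : ℕ) : ℝ) ^ 2)⁻¹))
      Filter.atTop (nhds 0) := by
  have hfsum : Summable (fun k : ℕ => ((k : ℝ) ^ 2)⁻¹) := by
    simpa [one_div] using (Real.summable_one_div_nat_pow (p := 2)).mpr one_lt_two
  -- Pythagoras: the squared norms of the components sum to the squared norm.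
  have key : ∀ v : H, HasSum (fun n => ‖P n v‖ ^ 2) (‖v‖ ^ 2) := by
    intro v
    have h1 : HasSum (fun n => (innerSL ℂ v) (P n v)) ((innerSL ℂ v) v) :=
      (innerSL ℂ v).hasSum (hsum v)
    have h2 : (fun n => (innerSL ℂ v) (P n v)) = fun n => ((‖P n v‖ ^ 2 : ℝ) : ℂ) := by
      funext n
      have hid : P n (P n v) = P n v := by
        have := DFunLike.congr_fun (hidem n) v
        simpa using this
      calc (innerSL ℂ v) (P n v) = ⟪v, P n v⟫ := rfl
        _ = ⟪v, P n (P n v)⟫ := by rw [hid]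
        _ = ⟪P n v, P n v⟫ := (hsym n v (P n v)).symm
        _ = ((‖P n v‖ : ℂ)) ^ 2 := inner_self_eq_norm_sq_to_K (P n v)
        _ = ((‖P n v‖ ^ 2 : ℝ) : ℂ) := by push_cast; ring
    have h3 : ((innerSL ℂ v) v) = ((‖v‖ ^ 2 : ℝ) : ℂ) := by
      calc (innerSL ℂ v) v = ⟪v, v⟫ := rfl
        _ = ((‖v‖ : ℂ)) ^ 2 := inner_self_eq_norm_sq_to_K v
        _ = _ := by push_cast; ring
    rw [h2, h3] at h1
    have h5 := (Complex.hasSum_iff _ _).mp h1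
    simpa [← Complex.ofReal_pow] using h5.1
  constructor
  · -- the norm bound
    set s : ℝ := ∑' k : {k : ℕ // N < k}, (((k : ℕ) : ℝ) ^ 2)⁻¹ with hs_def
    have hs0 : 0 ≤ s := tsum_nonneg fun k => by positivity
    set F : ℕ → ℝ := fun k => if N < k then ((k : ℝ) ^ 2)⁻¹ else 0 with hF_def
    have hFnn : ∀ k, 0 ≤ F k := by
      intro k; simp only [hF_def]; split <;> positivity
    have hFle : ∀ k, F k ≤ ((k : ℝ) ^ 2)⁻¹ := by
      intro k; simp only [hF_def]; split
      · exact le_rfl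
      · positivity
    have hFsummable : Summable F := Summable.of_nonneg_of_le hFnn hFle hfsum
    have hFtsum : ∑' k, F k = s := by
      calc ∑' k, F k
          = ∑' k, Set.indicator {k : ℕ | N < k} (fun k => ((k : ℝ) ^ 2)⁻¹) k := by
            apply tsum_congr; intro k
            by_cases h : N < k <;>
              simp [hF_def, Set.indicator_apply, Set.mem_setOf_eq, h]
        _ = s := (tsum_subtype {k : ℕ | N < k} fun k => ((k : ℝ) ^ 2)⁻¹).symm
    have hFhasSum : HasSum F s := hFtsum ▸ hFsummable.hasSum
    have hF0 : F 0 = 0 := by simp [hF_def]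
    have hF1 : HasSum (fun n => F (n + 1)) s := by
      rw [hasSum_nat_add_iff 1]
      simpa [hF0] using hFhasSum
    set G : ℤ → ℝ := fun j => if (N : ℤ) < |j| then ((j : ℝ) ^ 2)⁻¹ else 0 with hG_def
    have hGeq : G = fun t => Int.rec (motive := fun _ => ℝ) F (fun n => F (n + 1)) t := by
      funext j
      cases j with
      | ofNat n =>
        show G (Int.ofNat n) = F n
        simp [hG_def, hF_def, Int.ofNat_eq_coe]
      | negSucc n =>
        show G (Int.negSucc n) = F (n + 1)
        simp only [hG_def, hF_def]
        have h2 : ((Int.negSucc n : ℝ)) ^ 2 = (((n + 1 : ℕ) : ℝ)) ^ 2 := by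
          rw [Int.cast_negSucc]; push_cast; ring
        have h1 : |Int.negSucc n| = ((n + 1 : ℕ) : ℤ) := by
          simp [Int.abs_eq_natAbs]
        rw [h1, h2]
        by_cases h : N < n + 1
        · rw [if_pos (by exact_mod_cast h), if_pos h]
        · rw [if_neg (by exact_mod_cast h), if_neg h]
    have hGhasSum : HasSum G (s + s) := by rw [hGeq]; exact hFhasSum.int_rec hF1
    have hGsummable : Summable G := hGhasSum.summable
    have hGtsum : ∑' j, G j = s + s := hGhasSum.tsum_eq
    have hGnn : ∀ j, 0 ≤ G j := by
      intro j; simp only [hG_def]; split <;> positivity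
    have main : ∀ x : H, ‖TN x‖ ≤ (Real.sqrt (2 * s) * ‖S‖) * ‖x‖ := by
      intro x
      have hx2 : HasSum (fun n => ‖P n x‖ ^ 2) (‖x‖ ^ 2) := key x
      set b2 : ℕ × ℕ → ℝ := fun p => ‖P p.2 (S (P p.1 x))‖ ^ 2 with hb2_def
      have hslice : ∀ n : ℕ, HasSum (fun m => b2 (n, m)) (‖S (P n x)‖ ^ 2) :=
        fun n => key (S (P n x))
      have hcol_le : ∀ n : ℕ, ‖S (P n x)‖ ^ 2 ≤ ‖S‖ ^ 2 * ‖P n x‖ ^ 2 := by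
        intro n
        have h := S.le_opNorm (P n x)
        nlinarith [norm_nonneg (S (P n x)), norm_nonneg (P n x), norm_nonneg S]
      have hcol : Summable (fun n : ℕ => ‖S (P n x)‖ ^ 2) :=
        Summable.of_nonneg_of_le (fun n => sq_nonneg _) hcol_le (hx2.summable.mul_left _)
      have hb2nn : (0 : ℕ × ℕ → ℝ) ≤ b2 := fun p => sq_nonneg _
      have hb2sum : Summable b2 := by
        rw [summable_prod_of_nonneg hb2nn]
        exact ⟨fun n => (hslice n).summable, hcol.congr fun n => ((hslice n).tsum_eq).symm⟩
      have hswap : Summable (fun p : ℕ × ℕ => b2 (p.2, p.1)) := hb2sum.prod_symm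
      have hq : Summable (fun m : ℕ => ∑' n : ℕ, b2 (n, m)) :=
        ((summable_prod_of_nonneg (fun p => sq_nonneg _)).mp hswap).2
      have hq_le : ∑' m : ℕ, ∑' n : ℕ, b2 (n, m) ≤ ‖S‖ ^ 2 * ‖x‖ ^ 2 := by
        have hcomm : ∑' (m : ℕ) (n : ℕ), b2 (n, m) = ∑' (n : ℕ) (m : ℕ), b2 (n, m) :=
          Summable.tsum_comm (f := fun n m => b2 (n, m)) hb2sum
        rw [hcomm]
        calc ∑' (n : ℕ) (m : ℕ), b2 (n, m) = ∑' n : ℕ, ‖S (P n x)‖ ^ 2 :=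
              tsum_congr fun n => (hslice n).tsum_eq
          _ ≤ ∑' n : ℕ, ‖S‖ ^ 2 * ‖P n x‖ ^ 2 :=
              Summable.tsum_le_tsum hcol_le hcol (hx2.summable.mul_left _)
          _ = ‖S‖ ^ 2 * ∑' n : ℕ, ‖P n x‖ ^ 2 := tsum_mul_left
          _ = ‖S‖ ^ 2 * ‖x‖ ^ 2 := by rw [hx2.tsum_eq]
      have hm : ∀ m : ℕ, ‖P m (TN x)‖ ^ 2 ≤ (2 * s) * ∑' n : ℕ, b2 (n, m) := by
        intro m
        set c : ℕ → ℝ :=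
          fun n => if (N : ℤ) < |(m : ℤ) - (n : ℤ)| then |(m : ℝ) - (n : ℝ)|⁻¹ else 0
          with hc_def
        have hcnn : ∀ n, 0 ≤ c n := by
          intro n; simp only [hc_def]; split <;> positivity
        have hc_sq : ∀ n : ℕ, c n ^ 2 = G ((m : ℤ) - (n : ℤ)) := by
          intro n
          simp only [hc_def, hG_def]
          split
          · rw [inv_pow, sq_abs]
            congr 1
            push_cast
            ring
          · simp
        have hinj : Function.Injective (fun n : ℕ => (m : ℤ) - (n : ℤ)) := by
          intro a b h
          simp only [sub_right_inj, Nat.cast_inj] at h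
          exact h
        have hc2 : Summable (fun n => c n ^ 2) :=
          (hGsummable.comp_injective hinj).congr fun n => (hc_sq n).symm
        have hc2_le : ∑' n, c n ^ 2 ≤ 2 * s := by
          have h := Summable.tsum_le_tsum_of_inj (fun n : ℕ => (m : ℤ) - (n : ℤ)) hinj
            (fun j _ => hGnn j) (fun n => le_of_eq (hc_sq n)) hc2 hGsummable
          rw [hGtsum] at h
          linarith
        have hbb2 : Summable (fun n : ℕ => ‖P m (S (P n x))‖ ^ 2) :=
          ((summable_prod_of_nonneg (fun p => sq_nonneg _)).mp hswap).1 m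
        have hw : HasSum (fun n : ℕ => if (N : ℤ) < |(m : ℤ) - (n : ℤ)|
            then (((m : ℂ) - (n : ℂ))⁻¹) • (P m (S (P n x))) else 0) (P m (TN x)) := by
          have h0 : HasSum (fun n : ℕ => ((P m).comp TN) (P n x)) (((P m).comp TN) x) :=
            ((P m).comp TN).hasSum (hsum x)
          have hfe : (fun n : ℕ => ((P m).comp TN) (P n x))
              = fun n : ℕ => if (N : ℤ) < |(m : ℤ) - (n : ℤ)|
                then (((m : ℂ) - (n : ℂ))⁻¹) • (P m (S (P n x))) else 0 := by
            funext n
            have h1 := DFunLike.congr_fun (hTN m n) x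
            simp only [ContinuousLinearMap.comp_apply, ContinuousLinearMap.zero_apply,
              ContinuousLinearMap.coe_zero, Pi.zero_apply, apply_ite
                (fun f : H →L[ℂ] H => f x)] at h1 ⊢
            by_cases hcond : (N : ℤ) < |(m : ℤ) - (n : ℤ)|
            · rw [if_pos hcond] at h1 ⊢
              have hmn : m ≠ n := by
                intro he
                subst he
                rw [sub_self, abs_zero] at hcond
                omega
              have h2 := DFunLike.congr_fun (hS m n) x
              simp only [ContinuousLinearMap.comp_apply,
                ContinuousLinearMap.smul_apply] at h2
              have hne : ((m : ℂ) - (n : ℂ)) ≠ 0 :=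
                sub_ne_zero.mpr (by exact_mod_cast hmn)
              rw [h1, h2, inv_smul_smul₀ hne]
            · rw [if_neg hcond] at h1 ⊢
              exact h1
          rwa [hfe] at h0
        have hw_norm_le : ∀ n : ℕ, ‖(if (N : ℤ) < |(m : ℤ) - (n : ℤ)|
            then (((m : ℂ) - (n : ℂ))⁻¹) • (P m (S (P n x))) else 0 : H)‖
            ≤ c n * ‖P m (S (P n x))‖ := by
          intro n
          simp only [hc_def]
          by_cases hcond : (N : ℤ) < |(m : ℤ) - (n : ℤ)|
          · rw [if_pos hcond, if_pos hcond, norm_smul, norm_inv]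
            have hcc : ‖(m : ℂ) - (n : ℂ)‖ = |(m : ℝ) - (n : ℝ)| := by
              rw [show ((m : ℂ) - (n : ℂ)) = (((m : ℝ) - (n : ℝ) : ℝ) : ℂ) by push_cast; ring,
                Complex.norm_real, Real.norm_eq_abs]
            rw [hcc]
          · rw [if_neg hcond, if_neg hcond, norm_zero, zero_mul]
        have hcs := cs_tsum hcnn (fun n => norm_nonneg _) hc2 hbb2
        have hwsum : Summable (fun n : ℕ => ‖(if (N : ℤ) < |(m : ℤ) - (n : ℤ)|
            then (((m : ℂ) - (n : ℂ))⁻¹) • (P m (S (P n x))) else 0 : H)‖) :=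
          Summable.of_nonneg_of_le (fun n => norm_nonneg _) hw_norm_le hcs.1
        have h3 : ‖P m (TN x)‖ ≤ ∑' n, c n * ‖P m (S (P n x))‖ := by
          calc ‖P m (TN x)‖
              = ‖∑' n : ℕ, (if (N : ℤ) < |(m : ℤ) - (n : ℤ)|
                  then (((m : ℂ) - (n : ℂ))⁻¹) • (P m (S (P n x))) else 0 : H)‖ := by
                rw [hw.tsum_eq]
            _ ≤ ∑' n : ℕ, ‖(if (N : ℤ) < |(m : ℤ) - (n : ℤ)|
                  then (((m : ℂ) - (n : ℂ))⁻¹) • (P m (S (P n x))) else 0 : H)‖ :=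
                norm_tsum_le_tsum_norm hwsum
            _ ≤ ∑' n, c n * ‖P m (S (P n x))‖ := Summable.tsum_le_tsum hw_norm_le hwsum hcs.1
        have h4 : ‖P m (TN x)‖
            ≤ Real.sqrt (2 * s) * Real.sqrt (∑' n, ‖P m (S (P n x))‖ ^ 2) := by
          refine h3.trans (hcs.2.trans ?_)
          exact mul_le_mul_of_nonneg_right (Real.sqrt_le_sqrt hc2_le) (Real.sqrt_nonneg _)
        have h5 : ‖P m (TN x)‖ ^ 2 ≤ (2 * s) * ∑' n, ‖P m (S (P n x))‖ ^ 2 := by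
          have h6 := pow_le_pow_left₀ (norm_nonneg _) h4 2
          calc ‖P m (TN x)‖ ^ 2 ≤ _ := h6
            _ = (2 * s) * ∑' n, ‖P m (S (P n x))‖ ^ 2 := by
              rw [mul_pow, Real.sq_sqrt (by linarith),
                Real.sq_sqrt (tsum_nonneg fun n => sq_nonneg _)]
        exact h5
      have hTx : HasSum (fun m => ‖P m (TN x)‖ ^ 2) (‖TN x‖ ^ 2) := key (TN x)
      have h6 : ‖TN x‖ ^ 2 ≤ (2 * s) * (‖S‖ ^ 2 * ‖x‖ ^ 2) := by
        rw [← hTx.tsum_eq]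
        calc ∑' m, ‖P m (TN x)‖ ^ 2 ≤ ∑' m : ℕ, (2 * s) * ∑' n : ℕ, b2 (n, m) :=
              Summable.tsum_le_tsum hm hTx.summable (hq.mul_left _)
          _ = (2 * s) * ∑' (m : ℕ) (n : ℕ), b2 (n, m) := tsum_mul_left
          _ ≤ (2 * s) * (‖S‖ ^ 2 * ‖x‖ ^ 2) := mul_le_mul_of_nonneg_left hq_le (by linarith)
      have h8 : ‖TN x‖ ≤ Real.sqrt ((2 * s) * (‖S‖ ^ 2 * ‖x‖ ^ 2)) := by
        have h9 := Real.sqrt_le_sqrt h6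
        rwa [Real.sqrt_sq (norm_nonneg _)] at h9
      calc ‖TN x‖ ≤ Real.sqrt ((2 * s) * (‖S‖ ^ 2 * ‖x‖ ^ 2)) := h8
        _ = Real.sqrt (2 * s) * (‖S‖ * ‖x‖) := by
          rw [show ‖S‖ ^ 2 * ‖x‖ ^ 2 = (‖S‖ * ‖x‖) ^ 2 by ring,
            Real.sqrt_mul (by linarith), Real.sqrt_sq (by positivity)]
        _ = (Real.sqrt (2 * s) * ‖S‖) * ‖x‖ := by ring
    have hop : ‖TN‖ ≤ Real.sqrt (2 * s) * ‖S‖ :=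
      TN.opNorm_le_bound (by positivity) main
    have hpi : (1 : ℝ) ≤ 2 * Real.pi := by nlinarith [Real.pi_gt_three]
    calc ‖TN‖ ≤ Real.sqrt (2 * s) * ‖S‖ := hop
      _ ≤ (2 * Real.pi) * (Real.sqrt (2 * s) * ‖S‖) :=
          le_mul_of_one_le_left (by positivity) hpi
      _ = 2 * Real.pi * Real.sqrt (2 * s) * ‖S‖ := by ring
  · -- the limit
    have h0 : ∀ M : ℕ, (∑' k : {k : ℕ // M < k}, (((k : ℕ) : ℝ) ^ 2)⁻¹)
        = ∑' i : ℕ, (((i + (M + 1) : ℕ) : ℝ) ^ 2)⁻¹ := by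
      intro M
      let e : ℕ ≃ {k : ℕ // M < k} :=
        ⟨fun i => ⟨i + (M + 1), by omega⟩, fun k => (k : ℕ) - (M + 1),
          fun i => by simp, fun k => Subtype.ext (by have := k.2; simp; omega)⟩
      exact (e.tsum_eq fun k : {k : ℕ // M < k} => (((k : ℕ) : ℝ) ^ 2)⁻¹).symm
    have h1 : Filter.Tendsto (fun M : ℕ => ∑' i : ℕ, (((i + (M + 1) : ℕ) : ℝ) ^ 2)⁻¹)
        Filter.atTop (nhds 0) := by
      have h := (tendsto_sum_nat_add (fun k : ℕ => ((k : ℝ) ^ 2)⁻¹)).comp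
        (Filter.tendsto_add_atTop_nat 1)
      have : ((fun i => ∑' k : ℕ, (((k + i : ℕ) : ℝ) ^ 2)⁻¹) ∘ (fun M : ℕ => M + 1))
          = fun M : ℕ => ∑' i : ℕ, (((i + (M + 1) : ℕ) : ℝ) ^ 2)⁻¹ := by
        funext M; rfl
      rwa [this] at h
    have h2 : Filter.Tendsto
        (fun M : ℕ => 2 * ∑' k : {k : ℕ // M < k}, (((k : ℕ) : ℝ) ^ 2)⁻¹)
        Filter.atTop (nhds 0) := by
      have h := h1.const_mul (2 : ℝ)
      rw [mul_zero] at h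
      exact h.congr fun M => by rw [← h0 M]
    have h3 := h2.sqrt
    rwa [Real.sqrt_zero] at h3
end

section
/- Let L be a Lipschitz seminorm on a unital pre-C*-algebra A (L(a)=0 iff a ∈ ℂ1), and σ a state of A. Then the set {a ∈ A : L(a) ≤ 1} has totally bounded image in A/ℂ1 (with quotient norm) if and only if the set E = {a ∈ A : L(a) ≤ 1 and σ(a) = 0} is norm-totally-bounded in A. -/
/-!
Write `P a = a - σ(a) 1` for the projection onto `ker σ` along `ℂ1`. Since `L(P a) ≤ L a`,
`P` maps `{L ≤ 1}` onto `E`, and since `P` kills `ℂ1` it factors through the quotient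
`A/ℂ1`; the factored map is Lipschitz with constant `1 + ‖1‖` because `‖σ‖ ≤ 1`. Hence `E`
is a uniformly continuous image of the image of `{L ≤ 1}` in `A/ℂ1`, and conversely that
image is the image of `E` under the (1-Lipschitz) quotient map.
-/

open Metric

section KerProj

variable {𝕜 A : Type*} [NormedField 𝕜] [SeminormedAddCommGroup A] [NormedSpace 𝕜 A]
  (σ : A →ₗ[𝕜] 𝕜) (u : A)

def kerProj : A →ₗ[𝕜] A := LinearMap.id - σ.smulRight u

@[simp]
theorem kerProj_apply (a : A) : kerProj σ u a = a - σ a • u := rfl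

variable {σ u}

theorem map_kerProj (hσu : σ u = 1) (a : A) : σ (kerProj σ u a) = 0 := by
  simp [hσu]

theorem kerProj_of_map_eq_zero {a : A} (ha : σ a = 0) : kerProj σ u a = a := by
  simp [ha]

theorem span_singleton_le_ker_kerProj (hσu : σ u = 1) : 𝕜 ∙ u ≤ LinearMap.ker (kerProj σ u) :=
  (Submodule.span_singleton_le_iff_mem _ _).2 <| by simp [hσu]

theorem mkQ_kerProj (a : A) : (𝕜 ∙ u).mkQ (kerProj σ u a) = (𝕜 ∙ u).mkQ a := by
  rw [Submodule.mkQ_apply, Submodule.mkQ_apply, Submodule.Quotient.eq]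
  simpa using Submodule.smul_mem _ (σ a) (Submodule.mem_span_singleton_self u)

theorem norm_kerProj_le (hσ : ∀ a, ‖σ a‖ ≤ ‖a‖) (a : A) :
    ‖kerProj σ u a‖ ≤ (1 + ‖u‖) * ‖a‖ :=
  calc ‖a - σ a • u‖ ≤ ‖a‖ + ‖σ a‖ * ‖u‖ := (norm_sub_le _ _).trans_eq (by rw [norm_smul])
    _ ≤ ‖a‖ + ‖a‖ * ‖u‖ := by gcongr; exact hσ a
    _ = (1 + ‖u‖) * ‖a‖ := by ring

def kerProjQuot (hσu : σ u = 1) : (A ⧸ 𝕜 ∙ u) →ₗ[𝕜] A :=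
  (𝕜 ∙ u).liftQ (kerProj σ u) (span_singleton_le_ker_kerProj hσu)

theorem norm_kerProjQuot_le (hσu : σ u = 1) (hσ : ∀ a, ‖σ a‖ ≤ ‖a‖) (x : A ⧸ 𝕜 ∙ u) :
    ‖kerProjQuot hσu x‖ ≤ (1 + ‖u‖) * ‖x‖ := by
  obtain ⟨a, rfl⟩ := Submodule.mkQ_surjective _ x
  have hK : 0 < 1 + ‖u‖ := by positivity
  have hP : ‖kerProj σ u a‖ / (1 + ‖u‖) ≤ infDist a (𝕜 ∙ u : Set A) := by
    refine (le_infDist ⟨0, Submodule.zero_mem _⟩).2 fun y hy => ?_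
    have hPy : kerProj σ u y = 0 := span_singleton_le_ker_kerProj hσu hy
    rw [div_le_iff₀' hK, dist_eq_norm, ← sub_zero (kerProj σ u a), ← hPy, ← map_sub]
    exact norm_kerProj_le hσ _
  have hnorm : ‖(𝕜 ∙ u).mkQ a‖ = infDist a (𝕜 ∙ u : Set A) :=
    QuotientAddGroup.norm_mk (S := (𝕜 ∙ u).toAddSubgroup) a
  rw [hnorm]
  exact (div_le_iff₀' hK).1 hP

theorem totallyBounded_mkQ_image_iff (hσu : σ u = 1) (hσ : ∀ a, ‖σ a‖ ≤ ‖a‖) (X : Set A) :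
    TotallyBounded ((𝕜 ∙ u).mkQ '' X) ↔ TotallyBounded (kerProj σ u '' X) := by
  have hmkQ : (𝕜 ∙ u).mkQ '' (kerProj σ u '' X) = (𝕜 ∙ u).mkQ '' X := by
    simp only [Set.image_image, mkQ_kerProj]
  have hlift : kerProjQuot hσu '' ((𝕜 ∙ u).mkQ '' X) = kerProj σ u '' X := by
    simp only [Set.image_image, kerProjQuot, Submodule.mkQ_apply, Submodule.liftQ_apply]
  constructor
  · intro h
    rw [← hlift]
    exact h.image <| AddMonoidHomClass.uniformContinuous_of_bound _ _ (norm_kerProjQuot_le hσu hσ)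
  · intro h
    rw [← hmkQ]
    exact h.image <| AddMonoidHomClass.uniformContinuous_of_bound (𝕜 ∙ u).mkQ 1 fun a => by
      simpa using Submodule.Quotient.norm_mk_le _ a

theorem kerProj_image_sublevel (hσu : σ u = 1) {L : A → ℝ}
    (hLadd : ∀ a b, L (a + b) ≤ L a + L b) (hLu : ∀ c : 𝕜, L (c • u) = 0) :
    kerProj σ u '' {a | L a ≤ 1} = {a | L a ≤ 1 ∧ σ a = 0} := by
  refine Set.Subset.antisymm ?_ fun a ha => ⟨a, ha.1, kerProj_of_map_eq_zero ha.2⟩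
  rintro _ ⟨a, ha, rfl⟩
  refine ⟨?_, map_kerProj hσu a⟩
  calc L (a - σ a • u) = L (a + (-σ a) • u) := by rw [neg_smul, sub_eq_add_neg]
    _ ≤ L a + 0 := (hLadd _ _).trans_eq (by rw [hLu])
    _ ≤ 1 := by simpa using ha

end KerProj

theorem stmt_16_general {A : Type*} [NormedRing A] [NormedAlgebra ℂ A]
    (L : A → ℝ)
    (hLadd : ∀ a b : A, L (a + b) ≤ L a + L b)
    (hLnull : ∀ a : A, L a = 0 ↔ ∃ c : ℂ, a = c • (1 : A))
    (σ : A →ₗ[ℂ] ℂ)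
    (hσ1 : σ 1 = 1)
    (hσbdd : ∀ a : A, ‖σ a‖ ≤ ‖a‖) :
    TotallyBounded ((Submodule.span ℂ ({1} : Set A)).mkQ '' {a : A | L a ≤ 1}) ↔
    TotallyBounded {a : A | L a ≤ 1 ∧ σ a = 0} := by
  rw [totallyBounded_mkQ_image_iff hσ1 hσbdd,
    kerProj_image_sublevel hσ1 hLadd fun c => (hLnull _).2 ⟨c, rfl⟩]

/-- Let `L` be a Lipschitz seminorm on a unital (pre-)C*-algebra `A` (a seminorm whose
null space is exactly `ℂ1`), and let `σ` be a state of `A`.  Then the image of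
`{a : L(a) ≤ 1}` in the quotient `A/ℂ1` (with the quotient seminorm) is totally bounded
if and only if `E = {a : L(a) ≤ 1 and σ(a) = 0}` is norm-totally-bounded in `A`. -/
theorem stmt_16 {A : Type*} [NormedRing A] [NormedAlgebra ℂ A] [StarRing A]
    (L : A → ℝ)
    (hL0 : ∀ a : A, 0 ≤ L a)
    (hLadd : ∀ a b : A, L (a + b) ≤ L a + L b)
    (hLsmul : ∀ (c : ℂ) (a : A), L (c • a) = ‖c‖ * L a)
    (hLnull : ∀ a : A, L a = 0 ↔ ∃ c : ℂ, a = c • (1 : A))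
    (σ : A →ₗ[ℂ] ℂ)
    (hσ1 : σ 1 = 1)
    (hσbdd : ∀ a : A, ‖σ a‖ ≤ ‖a‖) :
    TotallyBounded ((Submodule.span ℂ ({1} : Set A)).mkQ '' {a : A | L a ≤ 1}) ↔
    TotallyBounded {a : A | L a ≤ 1 ∧ σ a = 0} :=
  stmt_16_general L hLadd hLnull σ hσ1 hσbdd
end
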